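/- In the triangulated category T = K^b(proj K[x]), with P_n the complex K[x] --x^n--> K[x] in degrees -1, 0, define ε: P_2[1] ⊕ P_2 → P_2[1] ⊕ P_2 by the matrix (0, y^2_{2,2}; 0, 0). Then ε² = 0, and ε satisfies ε∘l = 0, l'∘ε = 0, h''∘ε∘k = 0, k'∘ε∘h' = 0, where l = (y^2_{3,2}, x^1_{3,2})^T: P_3 → P_2[1] ⊕ P_2, l' = (-x^2_{2,3}[1], y^1_{2,3}): P_2[1] ⊕ P_2 → P_3[1], h' = (y^3_{3,2}, x^0_{3,2})^T: P_3 → P_2[1] ⊕ P_2, h'' = (-x^1_{2,3}[1], y^2_{2,3}): P_2[1] ⊕ P_2 → P_3[1], k = diag(x^1_{1,2}[1], x^1_{1,2}): P_1[1] ⊕ P_1 → P_2[1] ⊕ P_2, k' = diag(x^0_{2,1}[1], x^0_{2,1}): P_2[1] ⊕ P_2 → P_1[1] ⊕ P_1. -/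

import Mathlib

/- Setup: `R = K[x]`, the two-term cochain complexes `P n = (R --x^n--> R)` in degrees
`-1, 0`, and the morphisms `x^i_{m,n}` and `y^i_{m,n}` in the bounded homotopy category
`K^b(proj R)` (realized inside the homotopy category of cochain complexes of
`R`-modules). -/

noncomputable section
open CategoryTheory CategoryTheory.Limits Polynomial ZeroObject CategoryTheory.Pretriangulated

variable (K : Type) [Field K]

abbrev RMod := ModuleCat.of (Polynomial K) (Polynomial K)

/-- Multiplication by `x^a` on `R = K[x]`. -/
def mulX (a : ℕ) : RMod K ⟶ RMod K :=
  ModuleCat.ofHom (LinearMap.mulLeft (Polynomial K) ((X : Polynomial K) ^ a))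

lemma mulX_comp (a b : ℕ) : mulX K a ≫ mulX K b = mulX K (a + b) := by
  apply ModuleCat.hom_ext
  apply LinearMap.ext
  intro p
  simp only [mulX, ModuleCat.hom_comp, ModuleCat.hom_ofHom, LinearMap.comp_apply,
    LinearMap.mulLeft_apply]
  ring

/-- The graded pieces of the two-term complexes `P n`. -/
def Pobj : ℤ → ModuleCat (Polynomial K) := fun i =>
  if i = -1 ∨ i = 0 then RMod K else ModuleCat.of (Polynomial K) PUnit

lemma PobjNeg : Pobj K (-1) = RMod K := by simp [Pobj]
lemma PobjZero : Pobj K 0 = RMod K := by simp [Pobj]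

/-- The differential of `P n`. -/
def Pd (n : ℕ) : ∀ i : ℤ, Pobj K i ⟶ Pobj K (i + 1) := fun i =>
  if h : i = -1 then
    eqToHom (by rw [h, PobjNeg]) ≫ mulX K n ≫ eqToHom (by rw [h]; norm_num [PobjZero])
  else 0

/-- The two-term complex `P n = (R --x^n--> R)` in degrees `-1, 0`. -/
def P (n : ℕ) : CochainComplex (ModuleCat (Polynomial K)) ℤ :=
  CochainComplex.of (Pobj K) (Pd K n) (fun i => by
    by_cases h : i = -1
    · have h2 : Pd K n (i + 1) = 0 := dif_neg (by omega)
      rw [h2, Limits.comp_zero]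
    · have h1 : Pd K n i = 0 := dif_neg h
      rw [h1, Limits.zero_comp])

lemma P_d_eq_zero (n : ℕ) (i j : ℤ) (hi : i ≠ -1) : (P K n).d i j = 0 := by
  by_cases h : i + 1 = j
  · subst h
    dsimp only [P]
    rw [CochainComplex.of_d]
    exact dif_neg hi
  · exact HomologicalComplex.shape _ _ _ (by simpa using h)

/-- The components of the chain map which is multiplication by `x^a` in degree `-1`
and by `x^b` in degree `0`. -/
def xComp (a b : ℕ) : ∀ i : ℤ, Pobj K i ⟶ Pobj K i := fun i =>
  if h : i = -1 then eqToHom (by rw [h, PobjNeg]) ≫ mulX K a ≫ eqToHom (by rw [h, PobjNeg])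
  else if h0 : i = 0 then
    eqToHom (by rw [h0, PobjZero]) ≫ mulX K b ≫ eqToHom (by rw [h0, PobjZero])
  else 0

/-- The chain map `P m ⟶ P n` which is multiplication by `x^a` in degree `-1` and by
`x^b` in degree `0`; it commutes with the differentials since `a + n = b + m`. -/
def xMap (m n a b : ℕ) (hab : a + n = b + m) : P K m ⟶ P K n :=
  CochainComplex.ofHom (xComp K a b) (by
    intro i
    by_cases hi : i = -1
    · subst hi
      show xComp K a b (-1) ≫ Pd K n (-1) = Pd K m (-1) ≫ xComp K a b (-1 + 1)
      rw [show xComp K a b (-1 + 1) = xComp K a b 0 from rfl]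
      rw [show xComp K a b (-1) = eqToHom (PobjNeg K) ≫ mulX K a ≫ eqToHom (PobjNeg K).symm
          from dif_pos rfl]
      rw [show xComp K a b 0 = eqToHom (PobjZero K) ≫ mulX K b ≫ eqToHom (PobjZero K).symm
          from by rw [xComp, dif_neg (by norm_num), dif_pos rfl]]
      rw [show Pd K n (-1) = eqToHom (PobjNeg K) ≫ mulX K n ≫
            eqToHom (by norm_num [PobjZero] : RMod K = Pobj K (-1 + 1))
          from dif_pos rfl]
      rw [show Pd K m (-1) = eqToHom (PobjNeg K) ≫ mulX K m ≫
            eqToHom (by norm_num [PobjZero] : RMod K = Pobj K (-1 + 1))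
          from dif_pos rfl]
      simp only [Category.assoc, eqToHom_trans_assoc, eqToHom_refl, Category.id_comp]
      try simp only [Category.comp_id]
      have e : mulX K a ≫ mulX K n = mulX K m ≫ mulX K b := by
        rw [mulX_comp, mulX_comp, hab]
        exact congrArg (mulX K) (Nat.add_comm b m)
      simp only [reassoc_of% e]
    · have h1 : Pd K m i = 0 := dif_neg hi
      have h2 : Pd K n i = 0 := dif_neg hi
      rw [P_d_eq_zero K m i _ hi, P_d_eq_zero K n i _ hi]
      exact Limits.comp_zero.trans Limits.zero_comp.symm)

/-- The components of `y^i_{m,n}`. -/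
def yComp (m n a : ℕ) : ∀ i : ℤ, (P K m).X i ⟶ ((P K n)⟦(1 : ℤ)⟧).X i := fun i =>
  if h : i = -1 then
    eqToHom (by rw [h]; exact PobjNeg K) ≫ mulX K a ≫
      eqToHom (by rw [h]; show RMod K = Pobj K (-1 + 1); norm_num [PobjZero])
  else 0

/-- The chain map `P m ⟶ (P n)⟦1⟧` whose only nonzero component is multiplication by
`x^a` in degree `-1` (landing in the degree `0` part of `P n`). -/
def yMap (m n a : ℕ) : P K m ⟶ (P K n)⟦(1 : ℤ)⟧ where
  f := yComp K m n a
  comm' := fun i j hij => by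
    have hj : i + 1 = j := hij
    have hY : ∀ i' j' : ℤ, i' ≠ -2 → ((P K n)⟦(1 : ℤ)⟧).d i' j' = 0 := fun i' j' h => by
      rw [CochainComplex.shiftFunctor_obj_d',
        P_d_eq_zero K n _ _ (by change i' + 1 ≠ -1; omega), smul_zero]
      rfl
    by_cases hi : i = -1
    · rw [hY i j (by omega), Limits.comp_zero,
        show yComp K m n a j = 0 from dif_neg (by omega), Limits.comp_zero]
    · rw [show yComp K m n a i = 0 from dif_neg hi, Limits.zero_comp]
      by_cases hj' : j = -1
      · rw [P_d_eq_zero K m i j hi, Limits.zero_comp]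
      · rw [show yComp K m n a j = 0 from dif_neg hj', Limits.comp_zero]

/-- The homotopy category of cochain complexes of `K[x]`-modules, in which the bounded
homotopy category of finitely generated projectives embeds fully faithfully. -/
abbrev KbT := HomotopyCategory (ModuleCat (Polynomial K)) (ComplexShape.up ℤ)

abbrev Q : CochainComplex (ModuleCat (Polynomial K)) ℤ ⥤ KbT K :=
  HomotopyCategory.quotient _ _

/-- `P n` as an object of the homotopy category. -/
abbrev Pbar (n : ℕ) : KbT K := (Q K).obj (P K n)

/-- The morphism `x^i_{m,n} : P m ⟶ P n` in the homotopy category, defined for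
`max (0, n - m) ≤ i` (expressed with truncated subtraction on `ℕ`); in degree `-1` it is
multiplication by `x^(i+m-n)` and in degree `0` multiplication by `x^i`. -/
def xbar (m n i : ℕ) (h : n - m ≤ i) : Pbar K m ⟶ Pbar K n :=
  (Q K).map (xMap K m n (i + m - n) i (by omega))

/-- The identification `Q(P n ⟦1⟧) ≅ (Q (P n))⟦1⟧` in the homotopy category. -/
def shIso (n : ℕ) : (Q K).obj ((P K n)⟦(1 : ℤ)⟧) ≅ (Pbar K n)⟦(1 : ℤ)⟧ :=
  ((Q K).commShiftIso (1 : ℤ)).app (P K n)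

/-- The morphism `y^i_{m,n} : P m ⟶ (P n)[1]` in the homotopy category, defined for
`i ≤ m`; its only nonzero component is multiplication by `x^(m-i)` in degree `-1`. -/
def ybar (m n i : ℕ) (_h : i ≤ m) : Pbar K m ⟶ (Pbar K n)⟦(1 : ℤ)⟧ :=
  (Q K).map (yMap K m n (m - i)) ≫ (shIso K n).hom

/- The objects and the fourteen structure morphisms of the octahedron built on the
composable morphisms `x¹₍₃,₃₎ : P₃ ⟶ P₃`, `x¹₍₃,₃₎ : P₃ ⟶ P₃`, following the paper:
`D = F = P₁[1] ⊕ P₁`, `E = P₂[1] ⊕ P₂`. -/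

abbrev Dob : KbT K := (Q K).obj ((P K 1)⟦(1 : ℤ)⟧ ⊞ P K 1)
abbrev Eob : KbT K := (Q K).obj ((P K 2)⟦(1 : ℤ)⟧ ⊞ P K 2)

def fO : Pbar K 3 ⟶ Pbar K 3 := xbar K 3 3 1 (by omega)
def gO : Pbar K 3 ⟶ Pbar K 3 := xbar K 3 3 1 (by omega)
def hO : Pbar K 3 ⟶ Pbar K 3 := xbar K 3 3 2 (by omega)
def f'O : Pbar K 3 ⟶ Dob K :=
  (Q K).map (biprod.lift (yMap K 3 1 0) (xMap K 3 1 2 0 (by omega)))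
def g'O : Pbar K 3 ⟶ Dob K := f'O K
def h'O : Pbar K 3 ⟶ Eob K :=
  (Q K).map (biprod.lift (yMap K 3 2 0) (xMap K 3 2 1 0 (by omega)))
def f''O : Dob K ⟶ (Pbar K 3)⟦(1 : ℤ)⟧ :=
  (Q K).map (biprod.desc (-((xMap K 1 3 0 2 (by omega))⟦(1 : ℤ)⟧')) (yMap K 1 3 0)) ≫
    (shIso K 3).hom
def g''O : Dob K ⟶ (Pbar K 3)⟦(1 : ℤ)⟧ := f''O K
def h''O : Eob K ⟶ (Pbar K 3)⟦(1 : ℤ)⟧ :=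
  (Q K).map (biprod.desc (-((xMap K 2 3 0 1 (by omega))⟦(1 : ℤ)⟧')) (yMap K 2 3 0)) ≫
    (shIso K 3).hom
/-- `k = diag(x¹₍₁,₂₎[1], x¹₍₁,₂₎)` (first octahedron). -/
def kO : Dob K ⟶ Eob K :=
  (Q K).map (biprod.map ((xMap K 1 2 0 1 (by omega))⟦(1 : ℤ)⟧') (xMap K 1 2 0 1 (by omega)))
/-- `k' = diag(x⁰₍₂,₁₎[1], x⁰₍₂,₁₎)` (first octahedron). -/
def k'O : Eob K ⟶ Dob K :=
  (Q K).map (biprod.map ((xMap K 2 1 1 0 (by omega))⟦(1 : ℤ)⟧') (xMap K 2 1 1 0 (by omega)))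
/-- `k~ = (x¹₍₁,₂₎[1], y¹₍₁,₂₎; 0, x¹₍₁,₂₎)` (second octahedron). -/
def ktO : Dob K ⟶ Eob K :=
  (Q K).map (biprod.desc
    (biprod.lift ((xMap K 1 2 0 1 (by omega))⟦(1 : ℤ)⟧') 0)
    (biprod.lift (yMap K 1 2 0) (xMap K 1 2 0 1 (by omega))))
/-- `k~' = (x⁰₍₂,₁₎[1], -y²₍₂,₁₎; 0, x⁰₍₂,₁₎)` (second octahedron). -/
def kt'O : Eob K ⟶ Dob K :=
  (Q K).map (biprod.desc
    (biprod.lift ((xMap K 2 1 1 0 (by omega))⟦(1 : ℤ)⟧') 0)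
    (biprod.lift (-(yMap K 2 1 0)) (xMap K 2 1 1 0 (by omega))))
/-- `k'' = f'[1] ∘ g''`. -/
def k''O : Dob K ⟶ (Dob K)⟦(1 : ℤ)⟧ :=
  g''O K ≫ (shiftFunctor (KbT K) (1 : ℤ)).map (f'O K)
def lO : Pbar K 3 ⟶ Eob K :=
  (Q K).map (biprod.lift (yMap K 3 2 1) (xMap K 3 2 2 1 (by omega)))
def l'O : Eob K ⟶ (Pbar K 3)⟦(1 : ℤ)⟧ :=
  (Q K).map (biprod.desc (-((xMap K 2 3 1 2 (by omega))⟦(1 : ℤ)⟧')) (yMap K 2 3 1)) ≫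
    (shIso K 3).hom

/-- The endomorphism `ε = (0, y²₍₂,₂₎; 0, 0)` of `E = P₂[1] ⊕ P₂`. -/
def εO : Eob K ⟶ Eob K :=
  (Q K).map (biprod.desc 0 (biprod.lift (yMap K 2 2 0) 0))

/- Since `ε = ι₁ ∘ y²₍₂,₂₎ ∘ π₂`, the composition rules for `x` and `y` reduce each of the five
composites to a single chain map `P m ⟶ P n[1]` which is multiplication by `x^a` in degree `-1`,
with `m ≤ a` or `n ≤ a`. Such a map factors through multiplication by `x^m` on `P m`, resp. by
`x^n` on `P n[1]`, and multiplication by `x^n` on `P n` is null-homotopic: the identity of `R`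
from degree `0` to degree `-1` is a homotopy. -/

lemma P_X_neg_one (n : ℕ) : (P K n).X (-1) = RMod K := PobjNeg K

lemma P_X_zero (n : ℕ) : (P K n).X 0 = RMod K := PobjZero K

lemma P_d_neg_one (n : ℕ) :
    (P K n).d (-1) 0 = eqToHom (P_X_neg_one K n) ≫ mulX K n ≫ eqToHom (P_X_zero K n).symm :=
  (CochainComplex.of_d (Pobj K) (Pd K n) (-1)).trans (dif_pos rfl)

lemma eqToHom_mulX_eqToHom_comp {A B C : ModuleCat (Polynomial K)} (a b : ℕ)
    (e₁ : A = RMod K) (e₂ : RMod K = B) (e₃ : B = RMod K) (e₄ : RMod K = C) :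
    (eqToHom e₁ ≫ mulX K a ≫ eqToHom e₂) ≫ (eqToHom e₃ ≫ mulX K b ≫ eqToHom e₄) =
      eqToHom e₁ ≫ mulX K (a + b) ≫ eqToHom e₄ := by
  subst e₁ e₂ e₄
  simp [mulX_comp]

section ChainMaps

variable {m n p : ℕ}

lemma xMap_f_neg_one (a b : ℕ) (hab : a + n = b + m) :
    (xMap K m n a b hab).f (-1) =
      eqToHom (P_X_neg_one K m) ≫ mulX K a ≫ eqToHom (P_X_neg_one K n).symm :=
  show xComp K a b (-1) = _ from dif_pos rfl

lemma xMap_f_zero (a b : ℕ) (hab : a + n = b + m) :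
    (xMap K m n a b hab).f 0 = eqToHom (P_X_zero K m) ≫ mulX K b ≫ eqToHom (P_X_zero K n).symm :=
  show xComp K a b 0 = _ from (dif_neg (by norm_num)).trans (dif_pos rfl)

lemma xMap_f_of_ne (a b : ℕ) (hab : a + n = b + m) {i : ℤ} (hi : i ≠ -1) (hi' : i ≠ 0) :
    (xMap K m n a b hab).f i = 0 :=
  (dif_neg hi).trans (dif_neg hi')

lemma yMap_f_neg_one (a : ℕ) :
    (yMap K m n a).f (-1) = eqToHom (P_X_neg_one K m) ≫ mulX K a ≫ eqToHom (P_X_zero K n).symm :=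
  show yComp K m n a (-1) = _ from dif_pos rfl

lemma yMap_f_of_ne (a : ℕ) {i : ℤ} (hi : i ≠ -1) : (yMap K m n a).f i = 0 :=
  dif_neg hi

lemma xMap_comp_yMap (a b c : ℕ) (hab : a + n = b + m) :
    xMap K m n a b hab ≫ yMap K n p c = yMap K m p (a + c) := by
  ext i : 1
  by_cases hi : i = -1
  · subst hi
    simp only [HomologicalComplex.comp_f, xMap_f_neg_one, yMap_f_neg_one]
    exact eqToHom_mulX_eqToHom_comp K a c _ _ _ _
  · simp only [HomologicalComplex.comp_f, yMap_f_of_ne K _ hi, Limits.comp_zero]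

lemma yMap_comp_shift_map_xMap (a c d : ℕ) (hcd : c + p = d + n) :
    yMap K m n a ≫ (xMap K n p c d hcd)⟦(1 : ℤ)⟧' = yMap K m p (a + d) := by
  ext i : 1
  by_cases hi : i = -1
  · subst hi
    simp only [HomologicalComplex.comp_f, CochainComplex.shiftFunctor_map_f', yMap_f_neg_one]
    change _ ≫ (xMap K n p c d hcd).f 0 = _
    rw [xMap_f_zero]
    exact eqToHom_mulX_eqToHom_comp K a d _ _ _ _
  · simp only [HomologicalComplex.comp_f, yMap_f_of_ne K _ hi, Limits.zero_comp]

end ChainMaps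

lemma xMap_self_eq_nullHomotopicMap' (n : ℕ) :
    xMap K n n n n rfl = Homotopy.nullHomotopicMap' (fun i j _ =>
      if h : i = 0 ∧ j = -1 then
        eqToHom (show (P K n).X i = (P K n).X j by rw [h.1, h.2, P_X_zero, P_X_neg_one])
      else 0) := by
  ext i : 1
  rcases (show i = -1 ∨ i = 0 ∨ (i ≠ -1 ∧ i ≠ 0) by omega) with rfl | rfl | ⟨h₁, h₀⟩
  · rw [Homotopy.nullHomotopicMap'_f (k₂ := -2) (k₀ := 0) rfl rfl, dif_pos (by norm_num),
      dif_neg (by norm_num), Limits.zero_comp, add_zero]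
    simp [xMap_f_neg_one, P_d_neg_one]
  · rw [Homotopy.nullHomotopicMap'_f (k₂ := -1) (k₀ := 1) rfl rfl, dif_neg (by norm_num),
      dif_pos (by norm_num), Limits.comp_zero, zero_add]
    simp [xMap_f_zero, P_d_neg_one]
  · rw [Homotopy.nullHomotopicMap'_f (k₂ := i - 1) (k₀ := i + 1) (by simp) rfl,
      dif_neg (by omega), dif_neg (by omega), xMap_f_of_ne K _ _ _ h₁ h₀, Limits.zero_comp,
      Limits.comp_zero, add_zero]

def xMapSelfNullHomotopy (n : ℕ) : Homotopy (xMap K n n n n rfl) 0 :=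
  (Homotopy.ofEq (xMap_self_eq_nullHomotopicMap' K n)).trans (Homotopy.nullHomotopy' _)

lemma Q_map_yMap_eq_zero_of_source_le {m n a : ℕ} (h : m ≤ a) :
    (Q K).map (yMap K m n a) = 0 := by
  obtain ⟨c, rfl⟩ := Nat.exists_eq_add_of_le h
  rw [← xMap_comp_yMap K m m c rfl, Functor.map_comp,
    HomotopyCategory.eq_of_homotopy _ _ (xMapSelfNullHomotopy K m), Functor.map_zero,
    Limits.zero_comp]

lemma Q_map_yMap_eq_zero_of_target_le {m n a : ℕ} (h : n ≤ a) :
    (Q K).map (yMap K m n a) = 0 := by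
  obtain ⟨c, rfl⟩ := Nat.exists_eq_add_of_le' h
  rw [← yMap_comp_shift_map_xMap K c n n rfl, Functor.map_comp,
    HomotopyCategory.eq_of_homotopy _ _ ((xMapSelfNullHomotopy K n).shift 1), Functor.map_zero,
    Functor.map_zero, Limits.comp_zero]

lemma εO_eq : εO K = (Q K).map (biprod.snd ≫ yMap K 2 2 0 ≫ biprod.inl) := by
  simp [εO, biprod.desc_eq, biprod.lift_eq]

lemma εO_comp_εO : εO K ≫ εO K = 0 := by
  simp [εO_eq, ← Functor.map_comp]

lemma lO_comp_εO : lO K ≫ εO K = 0 := by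
  rw [lO, εO_eq, ← Functor.map_comp, biprod.lift_snd_assoc, reassoc_of% xMap_comp_yMap,
    Functor.map_comp, Q_map_yMap_eq_zero_of_target_le K (by norm_num), Limits.zero_comp]

lemma εO_comp_l'O : εO K ≫ l'O K = 0 := by
  rw [εO_eq, l'O, ← Functor.map_comp_assoc, Category.assoc, Category.assoc, biprod.inl_desc,
    Preadditive.comp_neg, yMap_comp_shift_map_xMap, Preadditive.comp_neg, Functor.map_neg,
    Functor.map_comp, Q_map_yMap_eq_zero_of_source_le K (by norm_num)]
  simp

lemma kO_comp_εO_comp_h''O : kO K ≫ εO K ≫ h''O K = 0 := by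
  rw [kO, εO_eq, h''O, ← Functor.map_comp_assoc, ← Functor.map_comp_assoc]
  simp only [Category.assoc, biprod.map_snd_assoc, biprod.inl_desc, Preadditive.comp_neg,
    yMap_comp_shift_map_xMap, xMap_comp_yMap, Functor.map_neg, Functor.map_comp]
  rw [Q_map_yMap_eq_zero_of_source_le K (by norm_num)]
  simp

lemma h'O_comp_εO_comp_k'O : h'O K ≫ εO K ≫ k'O K = 0 := by
  rw [h'O, εO_eq, k'O, ← Functor.map_comp, ← Functor.map_comp]
  simp only [Category.assoc, biprod.lift_snd_assoc, biprod.inl_map,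
    reassoc_of% yMap_comp_shift_map_xMap, reassoc_of% xMap_comp_yMap, Functor.map_comp]
  rw [Q_map_yMap_eq_zero_of_target_le K (by norm_num), Limits.zero_comp]

/-- `ε² = 0`, `ε ∘ l = 0`, `l' ∘ ε = 0`, `h'' ∘ ε ∘ k = 0` and
`k' ∘ ε ∘ h' = 0`. -/
theorem epsilon_relations :
    εO K ≫ εO K = 0 ∧
    lO K ≫ εO K = 0 ∧
    εO K ≫ l'O K = 0 ∧
    kO K ≫ εO K ≫ h''O K = 0 ∧
    h'O K ≫ εO K ≫ k'O K = 0 :=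
  ⟨εO_comp_εO K, lO_comp_εO K, εO_comp_l'O K, kO_comp_εO_comp_h''O K, h'O_comp_εO_comp_k'O K⟩
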